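/- arXiv:1007.5503 — 6 statements merged into one kernel-verified Lean document; each statement's English description precedes it below -/
import Mathlib

section
/- For a finitely generated projective module V over a commutative ring R, the dual of the submodule Sym_n(V) of symmetric tensors in V^{⊗n} is naturally isomorphic to Sym^n(V*), via the map sending φ₁·φ₂⋯φ_n to the functional v₁⊗⋯⊗v_n ↦ φ₁(v₁)⋯φ_n(v_n). -/
/-!
For a free module `F` with finite basis `b`, the tensor power `⨂ⁿ F` has the basis `e_f`,
`f : Fin n → ι`. A tensor is symmetric iff its coordinates are constant on `Sₙ`-orbits of
multi-indices, so the orbit sums `T_q = ∑_{f ∈ q} e_f` span `Sym_n F`; dually, `Symⁿ F*` is spanned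
by the classes `G_q` of the monomials `b*_{f 1} ⋯ b*_{f n}`, `f ∈ q`. The pairing satisfies
`⟨G_q, T_q'⟩ = δ_{q q'}`, which forces the comparison map `Symⁿ F* → (Sym_n F)*` to be bijective.
Both sides are functorial and the comparison map is natural, so bijectivity passes to retracts of
free modules, i.e. to finitely generated projective modules.
-/

open Module
open scoped TensorProduct

/-- The `k`-th symmetric power of a module, defined as the quotient of the `k`-fold
tensor power by the relations identifying a pure tensor with its permutations. -/
abbrev SymPow (R : Type*) [CommRing R] (k : ℕ) (M : Type*) [AddCommGroup M] [Module R M] :=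
  (⨂[R]^k M) ⧸ Submodule.span R
    {x : ⨂[R]^k M | ∃ (v : Fin k → M) (σ : Equiv.Perm (Fin k)),
      x = (⨂ₜ[R] i, v i) - ⨂ₜ[R] i, v (σ i)}

/-- The submodule `Sym_n M` of symmetric tensors in the `n`-fold tensor power of `M`:
tensors invariant under the permutation action of the symmetric group. -/
def symTensors (R : Type*) [CommRing R] (n : ℕ) (M : Type*) [AddCommGroup M] [Module R M] :
    Submodule R (⨂[R]^n M) where
  carrier := {x | ∀ σ : Equiv.Perm (Fin n),
    PiTensorProduct.reindex R (fun _ : Fin n => M) σ x = x}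
  add_mem' := fun hx hy σ => by rw [map_add, hx σ, hy σ]
  zero_mem' := fun σ => by simp
  smul_mem' := fun r x hx σ => by rw [map_smul, hx σ]

section

open PiTensorProduct

theorem Function.Bijective.of_retract {A B A' B' : Type*} {f : A → B} {g : A' → B'}
    {i : A → A'} {r : A' → A} {j : B → B'} {s : B' → B}
    (hri : Function.LeftInverse r i) (hsj : Function.LeftInverse s j)
    (hi : g ∘ i = j ∘ f) (hr : f ∘ r = s ∘ g) (hg : Function.Bijective g) :
    Function.Bijective f := by
  refine ⟨fun a a' h => hri.injective (hg.injective ?_), fun b => ?_⟩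
  · change (g ∘ i) a = (g ∘ i) a'
    rw [hi, Function.comp_apply, h, Function.comp_apply]
  · obtain ⟨a', ha'⟩ := hg.surjective (j b)
    refine ⟨r a', ?_⟩
    change (f ∘ r) a' = b
    rw [hr, Function.comp_apply, ha', hsj]

theorem LinearMap.bijective_of_biorthogonal {R P S κ : Type*} [CommRing R] [AddCommGroup P]
    [Module R P] [AddCommGroup S] [Module R S] [Finite κ] [DecidableEq κ]
    (α : P →ₗ[R] Dual R S) {G : κ → P} {T : κ → S}
    (hG : Submodule.span R (Set.range G) = ⊤) (hT : Submodule.span R (Set.range T) = ⊤)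
    (hGT : ∀ μ ν, α (G μ) (T ν) = if μ = ν then 1 else 0) :
    Function.Bijective α := by
  have := Fintype.ofFinite κ
  have hcoeff (c : κ → R) (ν : κ) : α (∑ μ, c μ • G μ) (T ν) = c ν := by
    simp [hGT]
  refine ⟨(injective_iff_map_eq_zero α).2 fun y hy => ?_, fun ξ => ?_⟩
  · obtain ⟨c, rfl⟩ := (Submodule.mem_span_range_iff_exists_fun R).1
      (hG.symm ▸ Submodule.mem_top : y ∈ Submodule.span R (Set.range G))
    have hc (ν : κ) : c ν = 0 := by rw [← hcoeff c ν, hy, LinearMap.zero_apply]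
    simp [hc]
  · exact ⟨∑ μ, ξ (T μ) • G μ, LinearMap.ext_on_range hT (hcoeff _)⟩

variable {R : Type*} [CommRing R] {n : ℕ} {M N P : Type*} [AddCommGroup M] [Module R M]
  [AddCommGroup N] [Module R N] [AddCommGroup P] [Module R P]

namespace PiTensorProduct

theorem dualDistrib_tprod_eq_lift (φ : Fin n → Dual R M) :
    dualDistrib (⨂ₜ[R] i, φ i) =
      lift ((MultilinearMap.mkPiAlgebra R (Fin n) R).compLinearMap φ) :=
  ext <| MultilinearMap.ext fun v => by simp

theorem dualDistrib_tprod_comp_perm (φ : Fin n → Dual R M) (σ : Equiv.Perm (Fin n)) :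
    dualDistrib (⨂ₜ[R] i, φ (σ i)) =
      dualDistrib (⨂ₜ[R] i, φ i) ∘ₗ (reindex R (fun _ : Fin n => M) σ).toLinearMap :=
  ext <| MultilinearMap.ext fun v => by
    simp only [LinearMap.compMultilinearMap_apply, LinearMap.coe_comp, LinearEquiv.coe_coe,
      Function.comp_apply, reindex_tprod, dualDistrib_apply]
    rw [← Equiv.prod_comp σ fun i => φ i (v (σ.symm i))]
    simp only [Equiv.symm_apply_apply]

theorem dualDistrib_tprod_dualMap (f : M →ₗ[R] N) (φ : Fin n → Dual R N) :
    dualDistrib (⨂ₜ[R] i, f.dualMap (φ i)) =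
      dualDistrib (⨂ₜ[R] i, φ i) ∘ₗ map fun _ : Fin n => f :=
  ext <| MultilinearMap.ext fun v => by simp

end PiTensorProduct

namespace SymPow

theorem mk_tprod_comp_perm (v : Fin n → M) (σ : Equiv.Perm (Fin n)) :
    (Submodule.Quotient.mk (⨂ₜ[R] i, v (σ i)) : SymPow R n M) =
      Submodule.Quotient.mk (⨂ₜ[R] i, v i) :=
  (Submodule.Quotient.eq _).2 <| by
    rw [← neg_mem_iff, neg_sub]
    exact Submodule.subset_span ⟨v, σ, rfl⟩

@[ext]
theorem hom_ext {g₁ g₂ : SymPow R n M →ₗ[R] P}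
    (h : ∀ v : Fin n → M, g₁ (Submodule.Quotient.mk (⨂ₜ[R] i, v i)) =
      g₂ (Submodule.Quotient.mk (⨂ₜ[R] i, v i))) : g₁ = g₂ :=
  Submodule.linearMap_qext _ <| PiTensorProduct.ext <| MultilinearMap.ext h

noncomputable def map (f : M →ₗ[R] N) : SymPow R n M →ₗ[R] SymPow R n N :=
  Submodule.mapQ _ _ (PiTensorProduct.map fun _ => f) <| by
    rw [← Submodule.map_le_iff_le_comap, Submodule.map_span, Submodule.span_le]
    rintro _ ⟨_, ⟨v, σ, rfl⟩, rfl⟩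
    simp only [map_sub, map_tprod]
    exact Submodule.subset_span ⟨fun i => f (v i), σ, rfl⟩

@[simp]
theorem map_mk_tprod (f : M →ₗ[R] N) (v : Fin n → M) :
    map f (Submodule.Quotient.mk (⨂ₜ[R] i, v i) : SymPow R n M) =
      Submodule.Quotient.mk (⨂ₜ[R] i, f (v i)) := by
  simp [map]

theorem map_id : map (LinearMap.id : M →ₗ[R] M) = (LinearMap.id : SymPow R n M →ₗ[R] _) := by
  ext; simp

theorem map_comp (f : M →ₗ[R] N) (g : N →ₗ[R] P) :
    map (g ∘ₗ f) = (map g ∘ₗ map f : SymPow R n M →ₗ[R] _) := by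
  ext; simp

end SymPow

namespace symTensors

noncomputable def map (f : M →ₗ[R] N) : symTensors R n M →ₗ[R] symTensors R n N :=
  (PiTensorProduct.map fun _ => f).restrict fun x hx σ => by
    rw [← map_reindex, hx σ]

@[simp]
theorem coe_map (f : M →ₗ[R] N) (x : symTensors R n M) :
    (map f x : ⨂[R]^n N) = PiTensorProduct.map (fun _ => f) x := rfl

theorem map_id : map (LinearMap.id : M →ₗ[R] M) = (LinearMap.id : symTensors R n M →ₗ[R] _) := by
  ext; simp [PiTensorProduct.map_id]

theorem map_comp (f : M →ₗ[R] N) (g : N →ₗ[R] P) :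
    map (g ∘ₗ f) = (map g ∘ₗ map f : symTensors R n M →ₗ[R] _) := by
  ext; simp [PiTensorProduct.map_comp]

end symTensors

namespace SymPow

variable (R n M) in
noncomputable def dualDistrib : SymPow R n (Dual R M) →ₗ[R] Dual R (symTensors R n M) :=
  Submodule.liftQ _ ((symTensors R n M).subtype.dualMap ∘ₗ PiTensorProduct.dualDistrib) <| by
    rw [Submodule.span_le]
    rintro _ ⟨φ, σ, rfl⟩
    rw [SetLike.mem_coe, LinearMap.mem_ker, map_sub, sub_eq_zero]
    ext x
    simp [dualDistrib_tprod_comp_perm, x.2 σ]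

@[simp]
theorem dualDistrib_mk (t : ⨂[R]^n (Dual R M)) (x : symTensors R n M) :
    dualDistrib R n M (Submodule.Quotient.mk t) x = PiTensorProduct.dualDistrib t x := rfl

theorem dualMap_comp_dualDistrib (f : M →ₗ[R] N) :
    (symTensors.map f).dualMap ∘ₗ dualDistrib R n N = dualDistrib R n M ∘ₗ map f.dualMap := by
  ext φ x
  simp [dualDistrib_tprod_dualMap]

theorem bijective_dualDistrib_of_retract {p : N →ₗ[R] M} {i : M →ₗ[R] N}
    (hpi : p ∘ₗ i = LinearMap.id) (hN : Function.Bijective (dualDistrib R n N)) :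
    Function.Bijective (dualDistrib R n M) := by
  refine hN.of_retract (i := map p.dualMap) (r := map i.dualMap)
    (j := (symTensors.map p).dualMap) (s := (symTensors.map i).dualMap) ?_ ?_
    (congrArg DFunLike.coe (dualMap_comp_dualDistrib p).symm)
    (congrArg DFunLike.coe (dualMap_comp_dualDistrib i).symm)
  · intro y
    rw [← LinearMap.comp_apply, ← map_comp, LinearMap.dualMap_comp_dualMap, hpi,
      LinearMap.dualMap_id, map_id, LinearMap.id_apply]
  · intro ξ
    rw [← LinearMap.comp_apply, LinearMap.dualMap_comp_dualMap, ← symTensors.map_comp, hpi,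
      symTensors.map_id, LinearMap.dualMap_id, LinearMap.id_apply]

end SymPow

abbrev tuplePermSetoid (n : ℕ) (ι : Type*) : Setoid (Fin n → ι) where
  r f g := ∃ σ : Equiv.Perm (Fin n), g = f ∘ σ
  iseqv := {
    refl := fun _ => ⟨1, rfl⟩
    symm := fun ⟨σ, h⟩ => ⟨σ⁻¹, by simp [h, Function.comp_assoc]⟩
    trans := fun ⟨σ, h⟩ ⟨τ, h'⟩ => ⟨σ * τ, by simp [h', h, Function.comp_assoc]⟩ }

attribute [local instance] tuplePermSetoid

theorem tuplePermSetoid.mk_comp_perm {ι : Type*} (f : Fin n → ι) (σ : Equiv.Perm (Fin n)) :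
    (⟦f ∘ σ⟧ : Quotient (tuplePermSetoid n ι)) = ⟦f⟧ :=
  (Quotient.sound (s := tuplePermSetoid n ι) (a := f) ⟨σ, rfl⟩).symm

namespace Module.Basis

open scoped Classical

variable {ι F : Type*} [AddCommGroup F] [Module R F] (b : Basis ι R F)

theorem dualDistrib_tprod_coord (f : Fin n → ι) :
    PiTensorProduct.dualDistrib (⨂ₜ[R] i, b.coord (f i)) =
      (Basis.piTensorProduct fun _ : Fin n => b).coord f :=
  (Basis.piTensorProduct fun _ : Fin n => b).ext fun g => by
    simp [Basis.piTensorProduct_apply, Finsupp.single_apply, Fintype.prod_ite_zero,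
      ← funext_iff]

theorem piTensorProduct_coord_comp_perm {x : ⨂[R]^n F} (hx : x ∈ symTensors R n F)
    (f : Fin n → ι) (σ : Equiv.Perm (Fin n)) :
    (Basis.piTensorProduct fun _ => b).coord (f ∘ σ) x =
      (Basis.piTensorProduct fun _ => b).coord f x := by
  rw [← dualDistrib_tprod_coord, ← dualDistrib_tprod_coord]
  change PiTensorProduct.dualDistrib (⨂ₜ[R] i, b.coord (f (σ i))) x = _
  rw [dualDistrib_tprod_comp_perm (fun j => b.coord (f j)), LinearMap.comp_apply,
    LinearEquiv.coe_coe, hx σ]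

variable [Fintype ι]

noncomputable def orbitSum (q : Quotient (tuplePermSetoid n ι)) : ⨂[R]^n F :=
  ∑ f with ⟦f⟧ = q, Basis.piTensorProduct (fun _ => b) f

theorem orbitSum_mem_symTensors (q : Quotient (tuplePermSetoid n ι)) :
    b.orbitSum q ∈ symTensors R n F := fun σ => by
  rw [orbitSum, map_sum]
  refine Finset.sum_equiv (σ.arrowCongr (Equiv.refl ι)) (fun f => ?_) fun f _ => ?_
  · simp only [Finset.mem_filter, Finset.mem_univ, true_and]
    change ⟦f⟧ = q ↔ ⟦f ∘ σ.symm⟧ = q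
    rw [tuplePermSetoid.mk_comp_perm]
  · simp [Basis.piTensorProduct_apply, reindex_tprod]

theorem span_range_orbitSum :
    Submodule.span R (Set.range fun q : Quotient (tuplePermSetoid n ι) =>
      (⟨b.orbitSum q, b.orbitSum_mem_symTensors q⟩ : symTensors R n F)) = ⊤ := by
  set B := Basis.piTensorProduct fun _ : Fin n => b
  refine Submodule.eq_top_iff'.2 fun x => (Submodule.mem_span_range_iff_exists_fun R).2
    ⟨fun q => B.coord q.out x.1, Subtype.ext ?_⟩
  simp only [Submodule.coe_sum, Submodule.coe_smul, orbitSum, Finset.smul_sum]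
  conv_rhs => rw [← B.sum_repr x, ← Finset.sum_fiberwise Finset.univ
    (fun f => (⟦f⟧ : Quotient (tuplePermSetoid n ι)))]
  refine Finset.sum_congr rfl fun q _ => Finset.sum_congr rfl fun f hf => ?_
  obtain ⟨σ, rfl⟩ := Quotient.exact (q.out_eq.trans (Finset.mem_filter.1 hf).2.symm)
  rw [← Basis.coord_apply, b.piTensorProduct_coord_comp_perm x.2]

noncomputable def orbitMonomial (q : Quotient (tuplePermSetoid n ι)) :
    SymPow R n (Dual R F) :=
  q.lift (fun f => Submodule.Quotient.mk (⨂ₜ[R] i, b.coord (f i))) fun f _ h => by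
    obtain ⟨σ, rfl⟩ := h
    exact (SymPow.mk_tprod_comp_perm (fun i => b.coord (f i)) σ).symm

theorem span_range_orbitMonomial :
    Submodule.span R (Set.range (b.orbitMonomial (n := n))) = ⊤ := by
  have : Set.range (b.orbitMonomial (n := n)) = Submodule.mkQ _ ''
      Set.range (Basis.piTensorProduct fun _ : Fin n => b.dualBasis) := by
    rw [← Set.range_comp, ← Quotient.mk_surjective.range_comp]
    congr 1
    funext f
    simp [Basis.piTensorProduct_apply, orbitMonomial]
  rw [this, Submodule.span_image, Basis.span_eq, Submodule.map_top]
  exact Submodule.range_mkQ _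

theorem dualDistrib_orbitMonomial_orbitSum (q q' : Quotient (tuplePermSetoid n ι)) :
    SymPow.dualDistrib R n F (b.orbitMonomial q)
      ⟨b.orbitSum q', b.orbitSum_mem_symTensors q'⟩ = if q = q' then 1 else 0 := by
  induction q using Quotient.inductionOn
  simp [orbitMonomial, orbitSum, dualDistrib_tprod_coord, Finsupp.single_apply,
    Fintype.prod_ite_zero, ← funext_iff]

end Module.Basis

theorem SymPow.bijective_dualDistrib_of_basis {ι F : Type*} [Finite ι] [AddCommGroup F]
    [Module R F] (b : Basis ι R F) : Function.Bijective (SymPow.dualDistrib R n F) := by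
  classical
  have := Fintype.ofFinite ι
  exact LinearMap.bijective_of_biorthogonal _ b.span_range_orbitMonomial b.span_range_orbitSum
    b.dualDistrib_orbitMonomial_orbitSum

theorem SymPow.bijective_dualDistrib (V : Type*) [AddCommGroup V] [Module R V]
    [Module.Projective R V] [Module.Finite R V] :
    Function.Bijective (SymPow.dualDistrib R n V) := by
  obtain ⟨m, p, hp⟩ := Module.Finite.exists_fin' R V
  obtain ⟨i, hpi⟩ := Module.projective_lifting_property p LinearMap.id hp
  exact bijective_dualDistrib_of_retract hpi
    (bijective_dualDistrib_of_basis (Pi.basisFun R (Fin m)))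

end

/-- For a finitely generated projective module `V`, the dual of the module `Sym_n V` of symmetric
tensors is naturally isomorphic to `Sym^n (V*)`, via
`φ₁ ⋯ φ_n ↦ (v₁ ⊗ ⋯ ⊗ v_n ↦ φ₁(v₁) ⋯ φ_n(v_n))`. -/
theorem dual_symTensors_equiv_symPow_dual
    (R : Type*) [CommRing R] (n : ℕ)
    (V : Type*) [AddCommGroup V] [Module R V] [Module.Projective R V] [Module.Finite R V] :
    ∃ e : SymPow R n (Dual R V) ≃ₗ[R] Dual R (symTensors R n V),
      ∀ (φ : Fin n → Dual R V) (x : symTensors R n V),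
        e (Submodule.Quotient.mk (⨂ₜ[R] i, φ i)) x =
          PiTensorProduct.lift
            ((MultilinearMap.mkPiAlgebra R (Fin n) R).compLinearMap fun i => φ i) x.1 :=
  ⟨.ofBijective _ (SymPow.bijective_dualDistrib V), fun φ x => by
    simp [PiTensorProduct.dualDistrib_tprod_eq_lift]⟩
end

section
/- Let M and N be free modules of rank n over a commutative ring R. The map sending a symmetric tensor φ₁⊗⋯⊗φ_n ∈ Sym_n(Hom(M,N)) to the homomorphism ∧ⁿM → ∧ⁿN given by m₁∧⋯∧m_n ↦ φ₁(m₁)∧⋯∧φ_n(m_n) is a well-defined R-linear map, and its evaluation on the diagonal element φ⊗⋯⊗φ equals the map m₁∧⋯∧m_n ↦ φ(m₁)∧⋯∧φ(m_n), i.e., the determinant of φ. -/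
open Module
open scoped TensorProduct

/-- The wedge product of a `Fin n`-family, as an element of the `n`-th exterior power. -/
noncomputable def wedgePure (R : Type*) [CommRing R] {M : Type*} [AddCommGroup M] [Module R M]
    (n : ℕ) (m : Fin n → M) : ⋀[R]^n M :=
  ⟨ExteriorAlgebra.ιMulti R n m, ExteriorAlgebra.ιMulti_range R n (Set.mem_range_self m)⟩

/-!
Pairing `φ₁ ⊗ ⋯ ⊗ φₙ` with `m₁ ⊗ ⋯ ⊗ mₙ` to `φ₁(m₁) ∧ ⋯ ∧ φₙ(mₙ)` is bilinear; the point is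
that for a symmetric tensor `x` the resulting multilinear map in `m` is alternating, so it factors
through `⋀ⁿ M`. Swapping two equal vectors
`mᵢ = mⱼ` only gives `v = -v`, which is not enough in characteristic `2`. Instead expand `x` in the
basis of `⨂ⁿ Hom(M, N)` induced by a basis `(bₖ)` of `Hom(M, N)`: symmetry makes the coefficients
of the words `w` and `w ∘ (i j)` equal, the corresponding terms
`b_{w₁}(m₁) ∧ ⋯ ∧ b_{wₙ}(mₙ)` are negatives of each other, and the terms with `wᵢ = wⱼ` vanish.
-/

open PiTensorProduct exteriorPower

section SymmetricCoordinates

variable {R : Type*} [CommRing R] {n : ℕ} {P : Type*} [AddCommGroup P] [Module R P]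
  {ι : Type*} (b : Basis ι R P)

lemma Module.Basis.piTensorProduct_repr_reindex (τ : Equiv.Perm (Fin n)) (x : ⨂[R]^n P)
    (w : Fin n → ι) :
    (Basis.piTensorProduct fun _ => b).repr (PiTensorProduct.reindex R (fun _ => P) τ x) w =
      (Basis.piTensorProduct fun _ => b).repr x (w ∘ τ) := by
  induction x using PiTensorProduct.induction_on with
  | smul_tprod r f =>
    simp only [map_smul, reindex_tprod, Finsupp.smul_apply, Basis.piTensorProduct_repr_tprod_apply,
      Function.comp_apply]
    congr 1
    exact (Equiv.prod_comp τ _).symm.trans (by simp)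
  | add x y hx hy => simp only [map_add, Finsupp.add_apply, hx, hy]

lemma Module.Basis.piTensorProduct_repr_comp_perm_of_mem_symTensors {x : ⨂[R]^n P}
    (hx : x ∈ symTensors R n P) (τ : Equiv.Perm (Fin n)) (w : Fin n → ι) :
    (Basis.piTensorProduct fun _ => b).repr x (w ∘ τ) =
      (Basis.piTensorProduct fun _ => b).repr x w := by
  rw [← b.piTensorProduct_repr_reindex τ, hx τ]

end SymmetricCoordinates

section WedgeEval

variable (R : Type*) [CommRing R] (n : ℕ) (M N : Type*) [AddCommGroup M] [Module R M]
  [AddCommGroup N] [Module R N]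

noncomputable def wedgeEval : (⨂[R]^n (M →ₗ[R] N)) →ₗ[R] (⨂[R]^n M) →ₗ[R] ⋀[R]^n N :=
  (LinearMap.llcomp R _ _ _ (lift (ιMulti R n).toMultilinearMap)).comp piTensorHomMap

variable {R n M N}

@[simp] lemma wedgeEval_tprod_tprod (φ : Fin n → M →ₗ[R] N) (m : Fin n → M) :
    wedgeEval R n M N (tprod R φ) (tprod R m) = ιMulti R n fun i => φ i (m i) := by
  simp [wedgeEval]

lemma wedgeEval_tprod_eq_zero_of_mem_symTensors [Module.Free R (M →ₗ[R] N)]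
    [Module.Finite R (M →ₗ[R] N)] {x : ⨂[R]^n (M →ₗ[R] N)} (hx : x ∈ symTensors R n _)
    {m : Fin n → M} {i j : Fin n} (hm : m i = m j) (hij : i ≠ j) :
    wedgeEval R n M N x (tprod R m) = 0 := by
  classical
  let b := Module.Free.chooseBasis R (M →ₗ[R] N)
  let c := (Basis.piTensorProduct fun _ : Fin n => b).repr x
  let τ := Equiv.swap i j
  let term (w : Fin n → Module.Free.ChooseBasisIndex R (M →ₗ[R] N)) : ⋀[R]^n N :=
    ιMulti R n fun k => b (w k) (m k)
  have hmτ : m ∘ τ = m := by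
    ext k
    rcases eq_or_ne k i with rfl | hki
    · simp [τ, hm]
    rcases eq_or_ne k j with rfl | hkj
    · simp [τ, hm]
    · simp [τ, Equiv.swap_apply_of_ne_of_ne hki hkj]
  have hterm_swap (w) : term (w ∘ τ) = -term w := by
    rw [← (ιMulti R n).map_swap _ hij]
    exact congrArg (ιMulti R n) (funext fun k => congrArg (b (w (τ k))) (congrFun hmτ k).symm)
  have hterm_fixed (w) (hw : w ∘ τ = w) : term w = 0 := by
    refine (ιMulti R n).map_eq_zero_of_eq _ ?_ hij
    have hwij : w i = w j := by simpa [τ] using (congrFun hw i).symm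
    simp only [hwij, hm]
  calc wedgeEval R n M N x (tprod R m)
      = ∑ w, c w • term w := by
        conv_lhs => rw [← (Basis.piTensorProduct fun _ : Fin n => b).sum_repr x]
        simp [term, c]
    _ = 0 := by
        refine Finset.sum_involution (fun w _ => w ∘ τ) (fun w _ => ?_) (fun w _ hne => ?_)
          (fun _ _ => Finset.mem_univ _) (fun w _ => by ext; simp [τ])
        · rw [hterm_swap, b.piTensorProduct_repr_comp_perm_of_mem_symTensors hx, smul_neg]
          exact add_neg_cancel _
        · exact fun hw => hne (by rw [hterm_fixed w hw, smul_zero])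

noncomputable def wedgeEvalAlternatingMap [Module.Free R (M →ₗ[R] N)]
    [Module.Finite R (M →ₗ[R] N)] {x : ⨂[R]^n (M →ₗ[R] N)} (hx : x ∈ symTensors R n _) :
    M [⋀^Fin n]→ₗ[R] ⋀[R]^n N where
  toMultilinearMap := (wedgeEval R n M N x).compMultilinearMap (tprod R)
  map_eq_zero_of_eq' _ _ _ hm hij := wedgeEval_tprod_eq_zero_of_mem_symTensors hx hm hij

@[simp] lemma wedgeEvalAlternatingMap_apply [Module.Free R (M →ₗ[R] N)]
    [Module.Finite R (M →ₗ[R] N)] {x : ⨂[R]^n (M →ₗ[R] N)} (hx : x ∈ symTensors R n _)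
    (m : Fin n → M) :
    wedgeEvalAlternatingMap hx m = wedgeEval R n M N x (tprod R m) :=
  rfl

variable (R n M N) in
noncomputable def symTensorsToAlternatingMap [Module.Free R (M →ₗ[R] N)]
    [Module.Finite R (M →ₗ[R] N)] :
    symTensors R n (M →ₗ[R] N) →ₗ[R] M [⋀^Fin n]→ₗ[R] ⋀[R]^n N where
  toFun x := wedgeEvalAlternatingMap x.2
  map_add' x y := by ext; simp
  map_smul' r x := by ext; simp

variable (R n M N) in
noncomputable def symTensorsDet [Module.Free R (M →ₗ[R] N)] [Module.Finite R (M →ₗ[R] N)] :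
    symTensors R n (M →ₗ[R] N) →ₗ[R] ⋀[R]^n M →ₗ[R] ⋀[R]^n N :=
  alternatingMapLinearEquiv.toLinearMap ∘ₗ symTensorsToAlternatingMap R n M N

lemma symTensorsDet_ιMulti [Module.Free R (M →ₗ[R] N)] [Module.Finite R (M →ₗ[R] N)]
    (x : symTensors R n (M →ₗ[R] N)) (m : Fin n → M) :
    symTensorsDet R n M N x (ιMulti R n m) = wedgeEval R n M N x (tprod R m) :=
  alternatingMapLinearEquiv_apply_ιMulti _ m

end WedgeEval

/-- For free modules `M`, `N` of rank `n`, the determinant construction gives a well-defined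
linear map `Sym_n Hom(M,N) → Hom(⋀ⁿM, ⋀ⁿN)` sending a symmetric tensor `φ₁ ⊗ ⋯ ⊗ φ_n` to
`m₁ ∧ ⋯ ∧ m_n ↦ φ₁(m₁) ∧ ⋯ ∧ φ_n(m_n)`; its value on the diagonal element `φ ⊗ ⋯ ⊗ φ` is the
determinant of `φ`, i.e. `m₁ ∧ ⋯ ∧ m_n ↦ φ(m₁) ∧ ⋯ ∧ φ(m_n)`. -/
theorem det_welldefined_on_symTensors
    (R : Type*) [CommRing R] (n : ℕ)
    (M : Type*) [AddCommGroup M] [Module R M]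
    (N : Type*) [AddCommGroup N] [Module R N]
    (bM : Basis (Fin n) R M) (bN : Basis (Fin n) R N) :
    ∃ D : symTensors R n (M →ₗ[R] N) →ₗ[R] ((⋀[R]^n M) →ₗ[R] (⋀[R]^n N)),
      (∀ (φ : Fin n → (M →ₗ[R] N)) (h : (⨂ₜ[R] i, φ i) ∈ symTensors R n (M →ₗ[R] N))
          (m : Fin n → M),
        D ⟨⨂ₜ[R] i, φ i, h⟩ (wedgePure R n m) = wedgePure R n (fun i => φ i (m i))) ∧
      (∀ (ψ : M →ₗ[R] N) (h : (⨂ₜ[R] _i : Fin n, ψ) ∈ symTensors R n (M →ₗ[R] N))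
          (m : Fin n → M),
        D ⟨⨂ₜ[R] _i : Fin n, ψ, h⟩ (wedgePure R n m) = wedgePure R n (fun i => ψ (m i))) := by
  have := Module.Free.of_basis (bM.linearMap bN)
  have := Module.Finite.of_basis (bM.linearMap bN)
  refine ⟨symTensorsDet R n M N, fun φ h m => ?_, fun ψ h m => ?_⟩ <;>
    exact (symTensorsDet_ιMulti _ m).trans (wedgeEval_tprod_tprod _ m)
end

section
/- Let R be a commutative ring and let C be a commutative R-algebra that is free of rank 3 as an R-module, with basis 1, ω, θ normalized so that ωθ ∈ R. Then there exist a, b, c, d ∈ R such that ωθ = −ad, ω² = −ac + bω − aθ, and θ² = −bd + dω − cθ. -/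
/-! Write `ω² = p + qω + rθ`, `θ² = s + tω + uθ` and `ωθ = n`. Expanding the associativity
identities `(ω²)θ = ω(ωθ)` and `ω(θ²) = (ωθ)θ` in the basis and comparing coefficients gives
`n = rt`, `p = -ru` and `s = -qt`, so `a = -r`, `b = q`, `c = -u`, `d = t` work. -/

namespace Module.Basis

variable {R C : Type*} [CommRing R] [CommRing C] [Algebra R C] {e : Basis (Fin 3) R C}

theorem eq_algebraMap_add_smul_add_smul_of_eq_one (he : e 0 = 1) (x : C) :
    x = algebraMap R C (e.repr x 0) + e.repr x 1 • e 1 + e.repr x 2 • e 2 := by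
  conv_lhs => rw [← e.sum_repr x]
  rw [Fin.sum_univ_three, he, Algebra.algebraMap_eq_smul_one]

theorem coeffs_eq_zero_of_algebraMap_add_smul_add_smul_eq_zero (he : e 0 = 1) {x₀ x₁ x₂ : R}
    (h : algebraMap R C x₀ + x₁ • e 1 + x₂ • e 2 = 0) : x₀ = 0 ∧ x₁ = 0 ∧ x₂ = 0 := by
  have hzero := Fintype.linearIndependent_iff.mp e.linearIndependent ![x₀, x₁, x₂]
    (by simpa [Fin.sum_univ_three, he, Algebra.algebraMap_eq_smul_one] using h)
  exact ⟨hzero 0, hzero 1, hzero 2⟩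

theorem structure_constants_of_mul_eq_algebraMap (he : e 0 = 1) {n p q r s t u : R}
    (hn : e 1 * e 2 = algebraMap R C n)
    (hω : e 1 * e 1 = algebraMap R C p + q • e 1 + r • e 2)
    (hθ : e 2 * e 2 = algebraMap R C s + t • e 1 + u • e 2) :
    n = r * t ∧ p = -(r * u) ∧ s = -(q * t) := by
  simp only [Algebra.smul_def] at hω hθ
  obtain ⟨-, hrt, hru⟩ := coeffs_eq_zero_of_algebraMap_add_smul_add_smul_eq_zero he
    (x₀ := q * n + r * s) (x₁ := r * t - n) (x₂ := p + r * u) (by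
      simp only [Algebra.smul_def, map_add, map_mul, map_sub]
      linear_combination (-e 2) * hω - algebraMap R C r * hθ + (e 1 - algebraMap R C q) * hn)
  obtain ⟨-, hqt, -⟩ := coeffs_eq_zero_of_algebraMap_add_smul_add_smul_eq_zero he
    (x₀ := u * n + t * p) (x₁ := s + t * q) (x₂ := t * r - n) (by
      simp only [Algebra.smul_def, map_add, map_mul, map_sub]
      linear_combination (-e 1) * hθ - algebraMap R C t * hω + (e 2 - algebraMap R C u) * hn)
  exact ⟨by linear_combination -hrt, by linear_combination hru, by linear_combination hqt⟩

end Module.Basis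

/-- A cubic algebra `C` over `R` with basis `1, ω, θ` normalized so that `ωθ ∈ R` has a
multiplication table of the stated shape: there are `a, b, c, d ∈ R` with
`ωθ = -ad`, `ω² = -ac + bω - aθ`, `θ² = -bd + dω - cθ`. -/
theorem cubic_algebra_multiplication_table
    (R : Type*) [CommRing R] (C : Type*) [CommRing C] [Algebra R C]
    (e : Module.Basis (Fin 3) R C) (he : e 0 = 1)
    (hnorm : ∃ r : R, e 1 * e 2 = algebraMap R C r) :
    ∃ a b c d : R,
      e 1 * e 2 = algebraMap R C (-(a * d)) ∧
      e 1 * e 1 = algebraMap R C (-(a * c)) + b • e 1 - a • e 2 ∧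
      e 2 * e 2 = algebraMap R C (-(b * d)) + d • e 1 - c • e 2 := by
  obtain ⟨n, hn⟩ := hnorm
  obtain ⟨p, q, r, hω⟩ : ∃ p q r : R, e 1 * e 1 = algebraMap R C p + q • e 1 + r • e 2 :=
    ⟨_, _, _, e.eq_algebraMap_add_smul_add_smul_of_eq_one he (e 1 * e 1)⟩
  obtain ⟨s, t, u, hθ⟩ : ∃ s t u : R, e 2 * e 2 = algebraMap R C s + t • e 1 + u • e 2 :=
    ⟨_, _, _, e.eq_algebraMap_add_smul_add_smul_of_eq_one he (e 2 * e 2)⟩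
  obtain ⟨rfl, rfl, rfl⟩ := e.structure_constants_of_mul_eq_algebraMap he hn hω hθ
  refine ⟨-r, q, -u, t, ?_, ?_, ?_⟩
  · rw [hn, neg_mul, neg_neg]
  · rw [hω, neg_smul, sub_neg_eq_add, neg_mul_neg]
  · rw [hθ, neg_smul, sub_neg_eq_add]
end

section
/- Let R = ℤ[a_{11},a_{12},a_{13},a_{22},a_{23},a_{33},b_{11},b_{12},b_{13},b_{22},b_{23},b_{33}] and let A = Σ_{i≤j} a_{ij}x_ix_j, B = Σ_{i≤j} b_{ij}x_ix_j in R[x₁,x₂,x₃]. For a permutation (i,j,k) of (1,2,3), set λ^{ℓ₁ℓ₂}_{ℓ₃ℓ₄} = a_{ℓ₁ℓ₂}b_{ℓ₃ℓ₄} − b_{ℓ₁ℓ₂}a_{ℓ₃ℓ₄} (with a_{ji} = a_{ij}). Then in the localization R[x₁,x₂,x₃][1/(x_ix_jx_k)] the following identity holds for all m, n ≥ 2: b_{kk}·A·x_k^{m+n-2}/(x_i^m x_j^n) − a_{kk}·B·x_k^{m+n-2}/(x_i^m x_j^n) = −b_{ik}·A·x_k^{m+n-3}/(x_i^{m-1}x_j^n)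 + a_{ik}·B·x_k^{m+n-3}/(x_i^{m-1}x_j^n) − b_{jk}·A·x_k^{m+n-3}/(x_i^m x_j^{n-1}) + a_{jk}·B·x_k^{m+n-3}/(x_i^m x_j^{n-1}) + a_{ij}·B·x_k^{m+n-4}/(x_i^{m-1}x_j^{n-1}) − b_{ij}·A·x_k^{m+n-4}/(x_i^{m-1}x_j^{n-1}) − b_{jj}·A·x_k^{m+n-4}/(x_i^m x_j^{n-2}) + a_{jj}·B·x_k^{m+n-4}/(x_i^m x_j^{n-2}) − b_{ii}·A·x_k^{m+n-4}/(x_i^{m-2}x_j^n) + a_{ii}·B·x_k^{m+n-4}/(x_i^{m-2}x_j^n). -/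
open MvPolynomial

variable {R : Type*} [CommRing R]

/-- A term `c · F · x_k^{ek} / (x_i^{mi} x_j^{ni})` in the localization of `R[x₁,x₂,x₃]`
away from `x₁x₂x₃`, where `u i` denotes the inverse of `x_i`. -/
noncomputable def lclTerm (c : R) (F : MvPolynomial (Fin 3) R) (k : Fin 3) (ek : ℕ)
    (i j : Fin 3) (mi ni : ℕ)
    (u : Fin 3 → Localization.Away (X 0 * X 1 * X 2 : MvPolynomial (Fin 3) R)) :
    Localization.Away (X 0 * X 1 * X 2 : MvPolynomial (Fin 3) R) :=
  algebraMap (MvPolynomial (Fin 3) R) _ (C c * F * X k ^ ek) * u i ^ mi * u j ^ ni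

set_option maxHeartbeats 2000000 in
/-- The core polynomial identity behind the syzygy. -/
lemma core_identity (a b : Fin 3 → Fin 3 → R)
    (ha : ∀ i j, a i j = a j i) (hb : ∀ i j, b i j = b j i)
    (A B : MvPolynomial (Fin 3) R)
    (hA : A = ∑ i, ∑ j, if i ≤ j then C (a i j) * X i * X j else 0)
    (hB : B = ∑ i, ∑ j, if i ≤ j then C (b i j) * X i * X j else 0)
    (i j k : Fin 3) (hij : i ≠ j) (hjk : j ≠ k) (hik : i ≠ k) :
    (C (b k k) * A - C (a k k) * B) * X k ^ 2 =
      (C (a i k) * B - C (b i k) * A) * X i * X k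
      + (C (a j k) * B - C (b j k) * A) * X j * X k
      + (C (a i j) * B - C (b i j) * A) * X i * X j
      + (C (a j j) * B - C (b j j) * A) * X j ^ 2
      + (C (a i i) * B - C (b i i) * A) * X i ^ 2 := by
  subst hA hB
  fin_cases i <;> fin_cases j <;> fin_cases k <;>
    first
    | exact absurd rfl hij
    | exact absurd rfl hjk
    | exact absurd rfl hik
    | (simp only [show ((⟨0, by omega⟩ : Fin 3)) = 0 from rfl,
        show ((⟨1, by omega⟩ : Fin 3)) = 1 from rfl, show ((⟨2, by omega⟩ : Fin 3)) = 2 from rfl,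
        Fin.sum_univ_three, ha 1 0, ha 2 0, ha 2 1, hb 1 0, hb 2 0, hb 2 1,
        show ((0:Fin 3) ≤ 0) = True by simp, show ((0:Fin 3) ≤ 1) = True by decide,
        show ((0:Fin 3) ≤ 2) = True by decide, show ((1:Fin 3) ≤ 1) = True by simp,
        show ((1:Fin 3) ≤ 2) = True by decide, show ((2:Fin 3) ≤ 2) = True by simp,
        show ((1:Fin 3) ≤ 0) = False by decide, show ((2:Fin 3) ≤ 0) = False by decide,
        show ((2:Fin 3) ≤ 1) = False by decide, if_true, if_false]
       ring)

/-- Shifting powers of `x_i`, `x_j` between numerator and denominator. -/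
lemma lclTerm_shift (c : R) (F : MvPolynomial (Fin 3) R) (k : Fin 3) (ek : ℕ)
    (i j : Fin 3) (mi ni di dj : ℕ)
    (u : Fin 3 → Localization.Away (X 0 * X 1 * X 2 : MvPolynomial (Fin 3) R))
    (hui : algebraMap (MvPolynomial (Fin 3) R) _ (X i) * u i = 1)
    (huj : algebraMap (MvPolynomial (Fin 3) R) _ (X j) * u j = 1) :
    lclTerm c F k ek i j mi ni u =
      algebraMap (MvPolynomial (Fin 3) R) _ (C c * F * X k ^ ek * X i ^ di * X j ^ dj) *
        u i ^ (mi + di) * u j ^ (ni + dj) := by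
  have hdi : (algebraMap (MvPolynomial (Fin 3) R)
      (Localization.Away (X 0 * X 1 * X 2 : MvPolynomial (Fin 3) R)) (X i)) ^ di * u i ^ di = 1 := by
    rw [← mul_pow, hui, one_pow]
  have hdj : (algebraMap (MvPolynomial (Fin 3) R)
      (Localization.Away (X 0 * X 1 * X 2 : MvPolynomial (Fin 3) R)) (X j)) ^ dj * u j ^ dj = 1 := by
    rw [← mul_pow, huj, one_pow]
  calc lclTerm c F k ek i j mi ni u
      = lclTerm c F k ek i j mi ni u *
        (((algebraMap (MvPolynomial (Fin 3) R) _ (X i)) ^ di * u i ^ di) *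
         ((algebraMap (MvPolynomial (Fin 3) R) _ (X j)) ^ dj * u j ^ dj)) := by
        rw [hdi, hdj, one_mul, mul_one]
    _ = _ := by
        simp only [lclTerm, map_mul, map_pow, pow_add]
        ring

/-- The syzygy identity (used to reduce the degree of relations in the proof that the local and
geometric constructions of the quartic ring agree): in the localization of `R[x₁,x₂,x₃]` at
`x₁x₂x₃`, with `A = Σ_{i≤j} a_{ij}x_ix_j`, `B = Σ_{i≤j} b_{ij}x_ix_j` the universal pair of
ternary quadratic forms, for any permutation `(i,j,k)` of the indices and all `m, n ≥ 2`,
`b_kk·A_{i^m j^n} - a_kk·B_{i^m j^n}` equals the stated combination of terms of lower degree,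
where `A_{i^m j^n} = A·x_k^{m+n-2}/(x_i^m x_j^n)`. -/
theorem syzygy_identity
    (a b : Fin 3 → Fin 3 → R)
    (ha : ∀ i j, a i j = a j i) (hb : ∀ i j, b i j = b j i)
    (A B : MvPolynomial (Fin 3) R)
    (hA : A = ∑ i, ∑ j, if i ≤ j then C (a i j) * X i * X j else 0)
    (hB : B = ∑ i, ∑ j, if i ≤ j then C (b i j) * X i * X j else 0)
    (i j k : Fin 3) (hij : i ≠ j) (hjk : j ≠ k) (hik : i ≠ k)
    (m n : ℕ) (hm : 2 ≤ m) (hn : 2 ≤ n)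
    (u : Fin 3 → Localization.Away (X 0 * X 1 * X 2 : MvPolynomial (Fin 3) R))
    (hu : ∀ l, algebraMap (MvPolynomial (Fin 3) R) _ (X l) * u l = 1) :
    lclTerm (b k k) A k (m + n - 2) i j m n u - lclTerm (a k k) B k (m + n - 2) i j m n u =
      - lclTerm (b i k) A k (m + n - 3) i j (m - 1) n u
      + lclTerm (a i k) B k (m + n - 3) i j (m - 1) n u
      - lclTerm (b j k) A k (m + n - 3) i j m (n - 1) u
      + lclTerm (a j k) B k (m + n - 3) i j m (n - 1) u
      + lclTerm (a i j) B k (m + n - 4) i j (m - 1) (n - 1) u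
      - lclTerm (b i j) A k (m + n - 4) i j (m - 1) (n - 1) u
      - lclTerm (b j j) A k (m + n - 4) i j m (n - 2) u
      + lclTerm (a j j) B k (m + n - 4) i j m (n - 2) u
      - lclTerm (b i i) A k (m + n - 4) i j (m - 2) n u
      + lclTerm (a i i) B k (m + n - 4) i j (m - 2) n u := by
  obtain ⟨m, rfl⟩ := Nat.exists_eq_add_of_le hm
  obtain ⟨n, rfl⟩ := Nat.exists_eq_add_of_le hn
  rw [show 2 + m + (2 + n) - 2 = m + n + 2 by omega,
    show 2 + m + (2 + n) - 3 = m + n + 1 by omega,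
    show 2 + m + (2 + n) - 4 = m + n by omega,
    show 2 + m - 1 = m + 1 by omega, show 2 + n - 1 = n + 1 by omega,
    show 2 + m - 2 = m by omega, show 2 + n - 2 = n by omega,
    show 2 + m = m + 2 by omega, show 2 + n = n + 2 by omega]
  rw [lclTerm_shift (b k k) A k (m + n + 2) i j (m + 2) (n + 2) 0 0 u (hu i) (hu j),
    lclTerm_shift (a k k) B k (m + n + 2) i j (m + 2) (n + 2) 0 0 u (hu i) (hu j),
    lclTerm_shift (b i k) A k (m + n + 1) i j (m + 1) (n + 2) 1 0 u (hu i) (hu j),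
    lclTerm_shift (a i k) B k (m + n + 1) i j (m + 1) (n + 2) 1 0 u (hu i) (hu j),
    lclTerm_shift (b j k) A k (m + n + 1) i j (m + 2) (n + 1) 0 1 u (hu i) (hu j),
    lclTerm_shift (a j k) B k (m + n + 1) i j (m + 2) (n + 1) 0 1 u (hu i) (hu j),
    lclTerm_shift (a i j) B k (m + n) i j (m + 1) (n + 1) 1 1 u (hu i) (hu j),
    lclTerm_shift (b i j) A k (m + n) i j (m + 1) (n + 1) 1 1 u (hu i) (hu j),
    lclTerm_shift (b j j) A k (m + n) i j (m + 2) n 0 2 u (hu i) (hu j),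
    lclTerm_shift (a j j) B k (m + n) i j (m + 2) n 0 2 u (hu i) (hu j),
    lclTerm_shift (b i i) A k (m + n) i j m (n + 2) 2 0 u (hu i) (hu j),
    lclTerm_shift (a i i) B k (m + n) i j m (n + 2) 2 0 u (hu i) (hu j)]
  have hφ := congrArg (algebraMap (MvPolynomial (Fin 3) R)
      (Localization.Away (X 0 * X 1 * X 2 : MvPolynomial (Fin 3) R)))
    (core_identity a b ha hb A B hA hB i j k hij hjk hik)
  simp only [map_mul, map_sub, map_add, map_pow] at hφ ⊢
  linear_combination (u i ^ (m + 2) * u j ^ (n + 2) *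
    (algebraMap (MvPolynomial (Fin 3) R)
      (Localization.Away (X 0 * X 1 * X 2 : MvPolynomial (Fin 3) R)) (X k)) ^ (m + n)) * hφ
end

section
/- Let R be a commutative ring. The R-algebra R[z₁,z₂]/(z₁³, z₁z₂, z₂²) is free of rank 4 as an R-module, with basis 1, z₁, z₁², z₂. -/
/-!
A polynomial lies in the monomial ideal `(X^m : m ∈ s)` exactly when all of its exponents lie in
the upper closure of `s`. So, as an `R`-module, that ideal consists of the polynomials supported on
the upper closure, the polynomials supported on its complement form a complementary submodule, and
the quotient has the monomials outside the upper closure as a basis. For `(z₁³, z₁z₂, z₂²)` these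
are `1, z₁, z₁², z₂`.
-/

open MvPolynomial

namespace MvPolynomial

variable {σ R : Type*} [CommRing R]

theorem coe_basisRestrictSupport_apply (t : Set (σ →₀ ℕ)) (n : t) :
    (basisRestrictSupport R t n : MvPolynomial σ R) = monomial n 1 := by
  classical
  suffices basisRestrictSupport R t n = ⟨monomial n 1, by simp⟩ by rw [this]
  rw [Module.Basis.apply_eq_iff]
  ext m
  change coeff m (monomial (n : σ →₀ ℕ) (1 : R)) = _
  simp only [coeff_monomial, Finsupp.single_apply, Subtype.ext_iff]

theorem isCompl_restrictSupport_compl (t : Set (σ →₀ ℕ)) :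
    IsCompl (restrictSupport R t) (restrictSupport R tᶜ) := by
  constructor
  · rw [Submodule.disjoint_def]
    intro p hp hpc
    rw [mem_restrictSupport_iff] at hp hpc
    rw [← support_eq_empty, ← Finset.coe_eq_empty, ← Set.subset_empty_iff,
      ← Set.inter_compl_self t]
    exact Set.subset_inter hp hpc
  · rw [codisjoint_iff, ← restrictSupport_univ, ← Set.union_compl_self t, restrictSupport_eq_span,
      restrictSupport_eq_span, restrictSupport_eq_span, Set.image_union, Submodule.span_union]

theorem restrictScalars_span_monomial_image (s : Set (σ →₀ ℕ)) :
    (Ideal.span ((monomial · (1 : R)) '' s)).restrictScalars R =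
      restrictSupport R (upperClosure s) := by
  ext p
  simp only [Submodule.restrictScalars_mem, mem_ideal_span_monomial_image,
    mem_restrictSupport_iff, Set.subset_def, SetLike.mem_coe, mem_upperClosure]

variable (R) in
noncomputable def basisQuotientSpanMonomial (s : Set (σ →₀ ℕ)) :
    Module.Basis ↥(↑(upperClosure s) : Set (σ →₀ ℕ))ᶜ R
      (MvPolynomial σ R ⧸ Ideal.span ((monomial · (1 : R)) '' s)) :=
  (basisRestrictSupport R _).map
    ((Submodule.quotientEquivOfIsCompl _ _ (isCompl_restrictSupport_compl _)).symm ≪≫ₗ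
      Submodule.quotEquivOfEq _ _ (restrictScalars_span_monomial_image s).symm ≪≫ₗ
      Submodule.Quotient.restrictScalarsEquiv R _)

theorem basisQuotientSpanMonomial_apply (s : Set (σ →₀ ℕ))
    (n : ↥(↑(upperClosure s) : Set (σ →₀ ℕ))ᶜ) :
    basisQuotientSpanMonomial R s n = Ideal.Quotient.mk _ (monomial n 1) := by
  simp only [basisQuotientSpanMonomial, Module.Basis.map_apply, LinearEquiv.trans_apply,
    Submodule.quotientEquivOfIsCompl_symm_apply, coe_basisRestrictSupport_apply]
  rfl

end MvPolynomial

namespace QuotientFreeRankFour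

open Finsupp in
noncomputable def relationExponents : Set (Fin 2 →₀ ℕ) :=
  {single 0 3, single 0 1 + single 1 1, single 1 2}

open Finsupp in
noncomputable def standardExponents : Fin 4 → (Fin 2 →₀ ℕ) :=
  ![0, single 0 1, single 0 2, single 1 1]

theorem span_relations_eq (R : Type*) [CommRing R] :
    Ideal.span {(X 0 ^ 3 : MvPolynomial (Fin 2) R), X 0 * X 1, X 1 ^ 2} =
      Ideal.span ((monomial · (1 : R)) '' relationExponents) := by
  simp only [X_pow_eq_monomial]
  simp [relationExponents, Set.image_insert_eq, X, monomial_mul]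

theorem compl_upperClosure_relationExponents :
    (↑(upperClosure relationExponents) : Set (Fin 2 →₀ ℕ))ᶜ = Set.range standardExponents := by
  ext n
  simp only [Set.mem_compl_iff, SetLike.mem_coe, mem_upperClosure, relationExponents,
    Set.mem_insert_iff, Set.mem_singleton_iff, exists_eq_or_imp, exists_eq_left, Set.mem_range,
    Fin.exists_fin_succ, Fin.exists_fin_zero]
  simp [standardExponents, Finsupp.le_def, Fin.forall_fin_two, Finsupp.ext_iff,
    Finsupp.single_apply]
  omega

theorem standardExponents_injective : Function.Injective standardExponents := by
  intro i j h
  fin_cases i <;> fin_cases j <;>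
    simp [standardExponents, Finsupp.ext_iff, Fin.forall_fin_two] at h ⊢

end QuotientFreeRankFour

/-- The `R`-algebra `R[z₁,z₂]/(z₁³, z₁z₂, z₂²)` is free of rank 4 as an `R`-module, with
basis `1, z₁, z₁², z₂`. -/
theorem quotient_free_rank_four
    (R : Type*) [CommRing R] :
    ∃ b : Module.Basis (Fin 4) R (MvPolynomial (Fin 2) R ⧸
        Ideal.span {(X 0 ^ 3 : MvPolynomial (Fin 2) R), X 0 * X 1, X 1 ^ 2}),
      b 0 = Ideal.Quotient.mk _ 1 ∧
      b 1 = Ideal.Quotient.mk _ (X 0) ∧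
      b 2 = Ideal.Quotient.mk _ (X 0 ^ 2) ∧
      b 3 = Ideal.Quotient.mk _ (X 1) := by
  open QuotientFreeRankFour in
  rw [span_relations_eq]
  let index : Fin 4 ≃ ↥(↑(upperClosure relationExponents) : Set (Fin 2 →₀ ℕ))ᶜ :=
    (Equiv.ofInjective _ standardExponents_injective).trans
      (Equiv.setCongr compl_upperClosure_relationExponents.symm)
  let b := (basisQuotientSpanMonomial R relationExponents).reindex index.symm
  have hb (i : Fin 4) : b i = Ideal.Quotient.mk _ (monomial (standardExponents i) 1) := by
    rw [Module.Basis.reindex_apply, basisQuotientSpanMonomial_apply]; rfl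
  refine ⟨b, ?_, ?_, ?_, ?_⟩
  · rw [hb, standardExponents, Matrix.cons_val_zero, monomial_zero', C_1]
  · rw [hb]; rfl
  · rw [hb, X_pow_eq_monomial]; rfl
  · rw [hb]; rfl
end

section
/- Let R = ℤ[a_{ij}, b_{ij}]_{1≤i≤j≤3}, A = Σ a_{ij}x_ix_j, B = Σ b_{ij}x_ix_j. In R[x₂/x₁, x₃/x₁] (functions on the chart x₁ ≠ 0 of the projective plane), with λ-notation λ^{ℓ₁ℓ₂}_{ℓ₃ℓ₄} = a_{ℓ₁ℓ₂}b_{ℓ₃ℓ₄} − b_{ℓ₁ℓ₂}a_{ℓ₃ℓ₄} and with h_{\underline{1},2}, h_{\underline{1},3} defined as the parts of H_{1,2} = b₃₃A·x₃/x₁² − a₃₃B·x₃/x₁² + b₁₃A/x₁ − a₁₃B/x₁ and H_{1,3} (analogously) having no x₂ resp. x₃ in the denominator, the identity h_{\underline{1},2} + h_{\underline{1},3} = λ^{11}_{23} + a₂₃·B/x₁² − b₂₃·A/x₁² holds in R[x₂/x₁, x₃/x₁]. -/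
open MvPolynomial

variable {R : Type*} [CommRing R]

/-- `λ^{pq}_{rs} = a_{pq}b_{rs} - b_{pq}a_{rs}`, given the four relevant coefficients. -/
def lamc (apq bpq ars brs : R) : R := apq * brs - bpq * ars

/-- The gluing identity `h_{1̲,2} + h_{1̲,3} = λ^{11}_{23} + a₂₃·B/x₁² - b₂₃·A/x₁²` in the
coordinate ring `R[x₂/x₁, x₃/x₁]` of the chart `x₁ ≠ 0`, realized as the polynomial ring in
`u = x₂/x₁` (the variable `X 0`) and `v = x₃/x₁` (the variable `X 1`).  Here `h_{1̲,2}` is the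
part of `H_{1,2} = b₃₃A_{1²2} - a₃₃B_{1²2} + b₁₃A_{12} - a₁₃B_{12}` having no `x₂` in the
denominator, and `h_{1̲,3}` the part of `H_{1,3}` having no `x₃` in the denominator. -/
theorem gluing_identity_chart_one
    (a11 a12 a13 a22 a23 a33 b11 b12 b13 b22 b23 b33 : R) :
    ((C (lamc a22 b22 a33 b33) * (X 0 * X 1) + C (lamc a12 b12 a33 b33) * X 1 +
        C (lamc a23 b23 a33 b33) * X 1 ^ 2 + C (lamc a22 b22 a13 b13) * X 0 +
        C (lamc a12 b12 a13 b13) + C (lamc a23 b23 a13 b13) * X 1) +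
      (C (lamc a33 b33 a22 b22) * (X 0 * X 1) + C (lamc a13 b13 a22 b22) * X 0 +
        C (lamc a23 b23 a22 b22) * X 0 ^ 2 + C (lamc a33 b33 a12 b12) * X 1 +
        C (lamc a13 b13 a12 b12) + C (lamc a23 b23 a12 b12) * X 0)
      : MvPolynomial (Fin 2) R) =
    C (lamc a11 b11 a23 b23) +
      C a23 * (C b11 + C b12 * X 0 + C b13 * X 1 + C b22 * X 0 ^ 2 +
        C b23 * (X 0 * X 1) + C b33 * X 1 ^ 2) -
      C b23 * (C a11 + C a12 * X 0 + C a13 * X 1 + C a22 * X 0 ^ 2 +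
        C a23 * (X 0 * X 1) + C a33 * X 1 ^ 2) := by
  simp only [lamc, map_sub, map_mul]; ring
end
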